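/- arXiv:2406.12854 — 3 statements merged into one kernel-verified Lean document; each statement's English description precedes it below -/
import Mathlib

section
/- The weight w(x) = e^{-x^2}/(1+2x^2)^2 on the real line makes the exceptional Hermite polynomials orthogonal: for m, n ∉ {1,2} with m ≠ n, ∫_{-∞}^{∞} p_m(x) p_n(x) e^{-x^2}/(1+2x^2)^2 dx = 0, where p_n(x) = H_n(x) + 4n H_{n-2}(x) + 4n(n-3) H_{n-4}(x). -/
open Polynomial MeasureTheory

/-- Physicists' Hermite polynomials `H_n`, satisfying `H_{n+1} = 2x H_n - 2n H_{n-1}`,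
equivalently given by the Rodrigues formula `H_n(x) = (-1)^n e^{x^2} (d/dx)^n e^{-x^2}`. -/
noncomputable def hermiteP : ℕ → Polynomial ℝ
  | 0 => 1
  | 1 => C 2 * X
  | (n + 2) => C 2 * X * hermiteP (n + 1) - C (2 * ((n : ℝ) + 1)) * hermiteP n

/-- `H_k` extended by `0` for `k < 0`. -/
noncomputable def Hz (k : ℤ) : Polynomial ℝ :=
  if k < 0 then 0 else hermiteP k.toNat

/-- Unnormalized exceptional Hermite polynomials
`p_n = H_n + 4n H_{n-2} + 4n(n-3) H_{n-4}` (and `0` for negative index). -/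
noncomputable def pE (k : ℤ) : Polynomial ℝ :=
  if k < 0 then 0 else
    Hz k + C (4 * (k : ℝ)) * Hz (k - 2) + C (4 * (k : ℝ) * ((k : ℝ) - 3)) * Hz (k - 4)

/-! For `n ∉ {1, 2}`, `p_n` solves `(1 + 2x²) p'' - 2x(2x² + 5) p' + 2n(1 + 2x²) p = 0`.
Since `w'/w = -2x(2x² + 5)/(1 + 2x²)` for `w = e^{-x²}/(1 + 2x²)²`, this is the
Sturm–Liouville equation `(w p')' = -2n w p`, so the weighted Wronskian
`w (p_m p_n' - p_n p_m')` has derivative `2(m - n) w p_m p_n`. Both are integrable on `ℝ`,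
so the integral of the derivative vanishes.

For `n ≥ 3` the equation comes from `p_n = 2(1 + 2x²) H_{n-2} + 8x H_{n-3}` and the fact that the
pair `(H_k, H_{k-1})` is closed under differentiation: `H_k' = 2k H_{k-1}` and
`H_{k-1}' = 2x H_{k-1} - H_k`. -/

theorem hermiteP_add_two (n : ℕ) :
    hermiteP (n + 2) = C 2 * X * hermiteP (n + 1) - C (2 * ((n : ℝ) + 1)) * hermiteP n :=
  rfl

theorem derivative_hermiteP_succ :
    ∀ n : ℕ, derivative (hermiteP (n + 1)) = C (2 * ((n : ℝ) + 1)) * hermiteP n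
  | 0 => by simp [hermiteP]
  | 1 => by
    rw [hermiteP_add_two]
    simp only [hermiteP, CharP.cast_eq_zero, zero_add, mul_one, derivative_sub, derivative_mul,
      derivative_C, zero_mul, derivative_X, sub_zero, Nat.cast_one, map_mul, map_add, map_one]
    ring
  | n + 2 => by
    have h1 := derivative_hermiteP_succ (n + 1)
    have h0 := derivative_hermiteP_succ n
    have hrec := hermiteP_add_two n
    rw [hermiteP_add_two (n + 1)]
    simp only [derivative_sub, derivative_mul, derivative_X, h1, h0, map_mul, map_add, map_natCast,
      map_one, C_ofNat, derivative_ofNat, derivative_natCast, derivative_one] at hrec ⊢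
    push_cast
    linear_combination (-2 * ((n : ℝ[X]) + 2)) * hrec

theorem derivative_hermiteP (n : ℕ) :
    derivative (hermiteP n) = C 2 * X * hermiteP n - hermiteP (n + 1) := by
  cases n with
  | zero => simp [hermiteP]
  | succ n =>
    rw [derivative_hermiteP_succ, hermiteP_add_two]
    ring

theorem Hz_natCast (n : ℕ) : Hz n = hermiteP n := by simp [Hz]

theorem C_mul_Hz_natCast_sub_one (j : ℕ) :
    C (2 * (j : ℝ)) * Hz ((j : ℤ) - 1) = C 2 * X * hermiteP j - hermiteP (j + 1) := by
  cases j with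
  | zero => simp [Hz, hermiteP]
  | succ j =>
    rw [show ((j + 1 : ℕ) : ℤ) - 1 = j by omega, Hz_natCast, hermiteP_add_two]
    push_cast
    ring

theorem pE_natCast_add_three (j : ℕ) :
    pE ((j + 3 : ℕ) : ℤ) = 2 * (1 + 2 * X ^ 2) * hermiteP (j + 1) + 8 * X * hermiteP j := by
  rw [pE, if_neg (by omega), Hz_natCast,
    show ((j + 3 : ℕ) : ℤ) - 2 = ((j + 1 : ℕ) : ℤ) by omega,
    show ((j + 3 : ℕ) : ℤ) - 4 = (j : ℤ) - 1 by omega, Hz_natCast]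
  have hrec := hermiteP_add_two (j + 1)
  have hrec' := hermiteP_add_two j
  have hlow := C_mul_Hz_natCast_sub_one j
  push_cast at hrec hrec' hlow ⊢
  simp only [map_mul, map_add, map_sub, map_natCast, C_ofNat, map_one] at hrec hrec' hlow ⊢
  linear_combination hrec + 2 * X * hrec' + 2 * ((j : ℝ[X]) + 3) * hlow

def SolvesExceptionalHermiteEq (c : ℝ) (p : ℝ[X]) : Prop :=
  (1 + 2 * X ^ 2) * derivative (derivative p) + C (2 * c) * (1 + 2 * X ^ 2) * p =
    2 * X * (2 * X ^ 2 + 5) * derivative p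

theorem solvesExceptionalHermiteEq_of_hermite_pair {A B : ℝ[X]} {k : ℝ}
    (hA : derivative A = C (2 * k) * B) (hB : derivative B = 2 * X * B - A) :
    SolvesExceptionalHermiteEq (k + 2) (2 * (1 + 2 * X ^ 2) * A + 8 * X * B) := by
  unfold SolvesExceptionalHermiteEq
  simp only [derivative_sub, derivative_mul, derivative_ofNat, derivative_one,
    derivative_X_pow_succ, derivative_X, derivative_C, hA, hB, map_add, map_mul, map_one, C_ofNat,
    Nat.cast_one, pow_one, zero_mul, zero_add, mul_one, add_zero, mul_zero]
  ring

theorem solvesExceptionalHermiteEq_pE {n : ℕ} (h1 : n ≠ 1) (h2 : n ≠ 2) :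
    SolvesExceptionalHermiteEq n (pE n) := by
  obtain rfl | ⟨j, rfl⟩ : n = 0 ∨ ∃ j, n = j + 3 := by
    rcases n with _ | _ | _ | j <;> simp_all
  · simp [SolvesExceptionalHermiteEq, pE, Hz, hermiteP]
  · rw [pE_natCast_add_three]
    convert solvesExceptionalHermiteEq_of_hermite_pair (derivative_hermiteP_succ j)
      (derivative_hermiteP j) using 1
    push_cast; ring

theorem SolvesExceptionalHermiteEq.wronskian {a b : ℝ} {p q : ℝ[X]}
    (hp : SolvesExceptionalHermiteEq a p) (hq : SolvesExceptionalHermiteEq b q) :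
    (1 + 2 * X ^ 2) * derivative (p * derivative q - q * derivative p) =
      2 * X * (2 * X ^ 2 + 5) * (p * derivative q - q * derivative p) +
        (1 + 2 * X ^ 2) * (C (2 * (a - b)) * (p * q)) := by
  unfold SolvesExceptionalHermiteEq at hp hq
  simp only [derivative_mul, map_mul, map_sub] at hp hq ⊢
  linear_combination p * hq - q * hp

noncomputable def exceptionalWeight (x : ℝ) : ℝ := Real.exp (-x ^ 2) / (1 + 2 * x ^ 2) ^ 2

theorem hasDerivAt_exceptionalWeight (x : ℝ) :
    HasDerivAt exceptionalWeight
      (-(2 * x * (2 * x ^ 2 + 5)) / (1 + 2 * x ^ 2) * exceptionalWeight x) x := by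
  have hexp : HasDerivAt (fun y => Real.exp (-y ^ 2)) (Real.exp (-x ^ 2) * -(2 * x)) x := by
    simpa using ((hasDerivAt_pow 2 x).neg).exp
  have hden : HasDerivAt (fun y => (1 + 2 * y ^ 2) ^ 2) (2 * (1 + 2 * x ^ 2) * (4 * x)) x := by
    refine ((((hasDerivAt_pow 2 x).const_mul 2).const_add 1).pow 2).congr_deriv ?_
    push_cast
    ring
  refine (hexp.div hden (by positivity)).congr_deriv ?_
  unfold exceptionalWeight
  field_simp
  ring

theorem hasDerivAt_eval_mul_exceptionalWeight {q r : ℝ[X]}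
    (h : (1 + 2 * X ^ 2) * derivative q = 2 * X * (2 * X ^ 2 + 5) * q + (1 + 2 * X ^ 2) * r)
    (x : ℝ) :
    HasDerivAt (fun y => q.eval y * exceptionalWeight y) (r.eval x * exceptionalWeight x) x := by
  have hx := congrArg (eval x) h
  simp only [eval_mul, eval_add, eval_pow, eval_X, eval_ofNat, eval_one] at hx
  refine ((q.hasDerivAt x).mul (hasDerivAt_exceptionalWeight x)).congr_deriv ?_
  field_simp
  linear_combination exceptionalWeight x * hx

theorem integrable_eval_mul_exp_neg_sq (q : ℝ[X]) :
    Integrable fun x => q.eval x * Real.exp (-x ^ 2) := by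
  simp_rw [eval_eq_sum_range, Finset.sum_mul]
  refine integrable_finsetSum _ fun i _ => ?_
  have hi : (-1 : ℝ) < i := by linarith [i.cast_nonneg (α := ℝ)]
  simpa [Real.rpow_natCast, mul_assoc] using
    (integrable_rpow_mul_exp_neg_mul_sq one_pos hi).const_mul (q.coeff i)

theorem integrable_eval_mul_exceptionalWeight (q : ℝ[X]) :
    Integrable fun x => q.eval x * exceptionalWeight x := by
  have hcont : Continuous exceptionalWeight :=
    continuous_iff_continuousAt.2 fun x => (hasDerivAt_exceptionalWeight x).continuousAt
  refine (integrable_eval_mul_exp_neg_sq q).mono (q.continuous.mul hcont).aestronglyMeasurable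
    (ae_of_all _ fun x => ?_)
  have hle : exceptionalWeight x ≤ Real.exp (-x ^ 2) :=
    div_le_self (Real.exp_pos _).le (one_le_pow₀ (by nlinarith))
  have hnonneg : 0 ≤ exceptionalWeight x := by unfold exceptionalWeight; positivity
  rw [norm_mul, norm_mul, Real.norm_of_nonneg hnonneg, Real.norm_of_nonneg (Real.exp_pos _).le]
  exact mul_le_mul_of_nonneg_left hle (norm_nonneg _)

/-- orthogonality of the exceptional Hermite polynomials with respect
to the weight `e^{-x²}/(1+2x²)²`. -/
theorem exceptional_hermite_orthogonal (m n : ℕ)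
    (hm1 : m ≠ 1) (hm2 : m ≠ 2) (hn1 : n ≠ 1) (hn2 : n ≠ 2) (hmn : m ≠ n) :
    ∫ x : ℝ, (pE (m : ℤ)).eval x * (pE (n : ℤ)).eval x *
      (Real.exp (-x ^ 2) / (1 + 2 * x ^ 2) ^ 2) = 0 := by
  have hW :=
    (solvesExceptionalHermiteEq_pE hm1 hm2).wronskian (solvesExceptionalHermiteEq_pE hn1 hn2)
  have h := integral_eq_zero_of_hasDerivAt_of_integrable (hasDerivAt_eval_mul_exceptionalWeight hW)
    (integrable_eval_mul_exceptionalWeight _) (integrable_eval_mul_exceptionalWeight _)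
  simp only [eval_mul, eval_C, mul_assoc, integral_const_mul] at h
  have hc : (m : ℝ) - n ≠ 0 := sub_ne_zero.2 (Nat.cast_injective.ne hmn)
  simpa [hc, exceptionalWeight, mul_assoc] using h
end

section
/- Define the operator D_0 = (x/4) d^2/dx^2 + ((α+x+1)(α-x)/(4(α+x))) d/dx + (α+3x)/(4(α+x)). Then for every n ≥ 1 and α > 0, D_0 applied to r_n(x) = -(x+α+1) L_{n-1}^{(α)}(x) + L_{n-2}^{(α)}(x) equals ((3-n)/4) r_n(x); equivalently, as an identity of polynomials, x(α+x) r_n'' + (α+x+1)(α-x) r_n' + (α+3x) r_n = (3-n)(α+x) r_n. -/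
open Polynomial MeasureTheory

/-- Classical (generalized) Laguerre polynomials
`L_n^{(α)}(x) = Σ_{k=0}^n (-1)^k C(n+α, n-k) x^k / k!`. -/
noncomputable def laguerreP (α : ℝ) (n : ℕ) : Polynomial ℝ :=
  ∑ k ∈ Finset.range (n + 1),
    C ((-1 : ℝ) ^ k *
        (∏ i ∈ Finset.range (n - k), (α + (k : ℝ) + 1 + (i : ℝ))) /
        ((Nat.factorial (n - k) : ℝ) * (Nat.factorial k : ℝ))) * X ^ k

/-- `L_k^{(α)}` extended by `0` for `k < 0`. -/
noncomputable def Lz (α : ℝ) (k : ℤ) : Polynomial ℝ :=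
  if k < 0 then 0 else laguerreP α k.toNat

/-- Exceptional Laguerre polynomials `r_n = -(x+α+1) L_{n-1}^{(α)} + L_{n-2}^{(α)}`. -/
noncomputable def rE (α : ℝ) (k : ℤ) : Polynomial ℝ :=
  -(X + C (α + 1)) * Lz α (k - 1) + Lz α (k - 2)

/-- Explicit coefficient formula for `laguerreP`. -/
lemma lag_coeff (α : ℝ) (m k : ℕ) : (laguerreP α m).coeff k =
    if k ≤ m then (-1 : ℝ) ^ k *
        (∏ i ∈ Finset.range (m - k), (α + (k : ℝ) + 1 + (i : ℝ))) /
        ((Nat.factorial (m - k) : ℝ) * (Nat.factorial k : ℝ)) else 0 := by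
  rw [laguerreP, finset_sum_coeff]
  simp only [coeff_C_mul, coeff_X_pow, mul_ite, mul_one, mul_zero]
  by_cases hk : k ≤ m
  · rw [if_pos hk, Finset.sum_eq_single k]
    · simp
    · intro b _ hb; simp [Ne.symm hb]
    · intro h; exact absurd (Finset.mem_range.mpr (by omega)) h
  · rw [if_neg hk]
    apply Finset.sum_eq_zero
    intro b hb
    simp only [Finset.mem_range] at hb
    rw [if_neg (by omega)]

/-- Coefficient recurrence underlying the Laguerre ODE. -/
lemma key1 (α : ℝ) (m k : ℕ) :
    ((k:ℝ)+1) * (α + k + 1) * (laguerreP α m).coeff (k+1)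
      + ((m:ℝ) - k) * (laguerreP α m).coeff k = 0 := by
  rw [lag_coeff, lag_coeff]
  rcases lt_trichotomy k m with h | rfl | h
  · rw [if_pos (by omega), if_pos (by omega)]
    obtain ⟨d, rfl⟩ : ∃ d, m = k+1+d := ⟨m - (k+1), by omega⟩
    have hsub1 : k+1+d - (k+1) = d := by omega
    have hsub2 : k+1+d - k = d+1 := by omega
    rw [hsub1, hsub2, Finset.prod_range_succ']
    have hP : (∏ i ∈ Finset.range d, (α + (k:ℝ) + 1 + ((i:ℝ)+1)))
        = ∏ i ∈ Finset.range d, (α + ((k:ℝ)+1) + 1 + (i:ℝ)) := by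
      apply Finset.prod_congr rfl; intros; ring
    push_cast
    rw [hP]
    have h1 : (Nat.factorial d : ℝ) ≠ 0 := Nat.cast_ne_zero.mpr (Nat.factorial_ne_zero d)
    have h2 : (Nat.factorial k : ℝ) ≠ 0 := Nat.cast_ne_zero.mpr (Nat.factorial_ne_zero k)
    rw [Nat.factorial_succ d, Nat.factorial_succ k]
    push_cast
    field_simp
    ring
  · rw [if_neg (by omega), if_pos le_rfl]
    simp
  · rw [if_neg (by omega), if_neg (by omega)]
    simp

/-- Coefficient identity underlying `L_{m+1}' - L_m' + L_m = 0`. -/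
lemma key2 (α : ℝ) (m k : ℕ) :
    ((k:ℝ)+1) * ((laguerreP α (m+1)).coeff (k+1) - (laguerreP α m).coeff (k+1))
      + (laguerreP α m).coeff k = 0 := by
  rw [lag_coeff, lag_coeff, lag_coeff]
  rcases lt_trichotomy k m with h | rfl | h
  · rw [if_pos (by omega), if_pos (by omega), if_pos (by omega)]
    obtain ⟨e, rfl⟩ : ∃ e, m = k+1+e := ⟨m - (k+1), by omega⟩
    have h1 : k+1+e+1 - (k+1) = e+1 := by omega
    have h2 : k+1+e - (k+1) = e := by omega
    have h3 : k+1+e - k = e+1 := by omega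
    rw [h1, h2, h3, Finset.prod_range_succ, Finset.prod_range_succ']
    have hP : (∏ i ∈ Finset.range e, (α + (k:ℝ) + 1 + ((i:ℝ)+1)))
        = ∏ i ∈ Finset.range e, (α + ((k:ℝ)+1) + 1 + (i:ℝ)) := by
      apply Finset.prod_congr rfl; intros; ring
    push_cast
    rw [hP]
    have q1 : (Nat.factorial e : ℝ) ≠ 0 := Nat.cast_ne_zero.mpr (Nat.factorial_ne_zero e)
    have q2 : (Nat.factorial k : ℝ) ≠ 0 := Nat.cast_ne_zero.mpr (Nat.factorial_ne_zero k)
    rw [Nat.factorial_succ e, Nat.factorial_succ k]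
    push_cast
    field_simp
    ring
  · rw [if_pos (by omega), if_neg (by omega), if_pos le_rfl]
    have h1 : k+1 - (k+1) = 0 := by omega
    have h2 : k - k = 0 := by omega
    rw [h1, h2]
    have q2 : (Nat.factorial k : ℝ) ≠ 0 := Nat.cast_ne_zero.mpr (Nat.factorial_ne_zero k)
    rw [Nat.factorial_succ k]
    push_cast
    field_simp
    ring
  · rw [if_neg (by omega), if_neg (by omega), if_neg (by omega)]
    simp

/-- The classical Laguerre differential equation. -/
lemma lag_ode (α : ℝ) (m : ℕ) :
    X * derivative (derivative (laguerreP α m))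
      + (C (α+1) - X) * derivative (laguerreP α m)
      + C ((m:ℕ) : ℝ) * laguerreP α m = 0 := by
  ext k
  rcases k with _ | k
  · simp only [coeff_add, mul_coeff_zero, coeff_X_zero, zero_mul, coeff_zero,
      sub_mul, coeff_sub, coeff_C_mul, coeff_derivative, coeff_C]
    have := key1 α m 0
    push_cast at this ⊢
    linear_combination this
  · simp only [coeff_add, coeff_X_mul, sub_mul, coeff_sub, coeff_C_mul,
      coeff_derivative, coeff_zero]
    have := key1 α m (k+1)
    push_cast at this ⊢
    linear_combination this

/-- Derivative relation `L_{m+1}' - L_m' + L_m = 0`. -/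
lemma lag_R3 (α : ℝ) (m : ℕ) :
    derivative (laguerreP α (m+1)) - derivative (laguerreP α m) + laguerreP α m = 0 := by
  ext k
  simp only [coeff_add, coeff_sub, coeff_derivative, coeff_zero]
  have := key2 α m k
  push_cast at this ⊢
  linear_combination this

lemma Lz_natCast (α : ℝ) (k : ℕ) : Lz α (k : ℤ) = laguerreP α k := by
  simp [Lz]

lemma lag_zero (α : ℝ) : laguerreP α 0 = C 1 := by
  simp [laguerreP]

/-- `D_0 r_n = ((3-n)/4) r_n`, as a polynomial identity after clearing
the denominator `4(α+x)`. -/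
theorem exceptional_laguerre_D0 (α : ℝ) (hα : 0 < α) (n : ℕ) (hn : 1 ≤ n) :
    X * (X + C α) * derivative (derivative (rE α (n : ℤ)))
      + (X + C (α + 1)) * (C α - X) * derivative (rE α (n : ℤ))
      + (C α + 3 * X) * rE α (n : ℤ)
      = C (3 - (n : ℝ)) * ((X + C α) * rE α (n : ℤ)) := by
  rcases n with _ | _ | m
  · omega
  · have hre : rE α ((1:ℕ) : ℤ) = -(X + C (α + 1)) * C 1 := by
      rw [rE]
      norm_num [Lz, lag_zero]
    rw [hre]
    simp only [derivative_mul, derivative_neg, derivative_add, derivative_X,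
      derivative_C, derivative_one, derivative_zero, mul_one]
    norm_num
    simp only [map_one, map_sub, map_add, Nat.cast_one, map_ofNat]
    ring
  · have h1 : ((m + 1 + 1 : ℕ) : ℤ) - 1 = ((m + 1 : ℕ) : ℤ) := by push_cast; ring
    have h2 : ((m + 1 + 1 : ℕ) : ℤ) - 2 = ((m : ℕ) : ℤ) := by push_cast; ring
    have hre : rE α ((m + 1 + 1 : ℕ) : ℤ)
        = -(X + C (α + 1)) * laguerreP α (m+1) + laguerreP α m := by
      rw [rE, h1, h2, Lz_natCast, Lz_natCast]
    rw [hre]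
    have R1 := lag_ode α (m+1)
    have R2 := lag_ode α m
    have R3 := lag_R3 α m
    simp only [Nat.cast_add, Nat.cast_one, Nat.cast_ofNat, map_add, map_sub,
      map_one, map_ofNat] at R1 R2 ⊢
    simp only [derivative_add, derivative_mul, derivative_neg, derivative_X,
      derivative_C, derivative_one, derivative_zero, zero_add, one_mul, add_zero,
      zero_mul, mul_zero]
    linear_combination (-(X + C α) * (X + C α + 1)) * R1 + (X + C α) * R2 + 2 * X * R3
end

section
/- For α > 0 and n ≥ 1, ∫_0^∞ r_n(x)^2 e^{-x} x^α/(x+α)^2 dx = (α+n) Γ(n+α) / ((α+n-1)(n-1)!), where r_n(x) = -(x+α+1) L_{n-1}^{(α)}(x) + L_{n-2}^{(α)}(x). -/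
/-!
Write `L = L_{n-1}^{(α-1)}`. Since `L_{n-2}^{(α)} = -L'` and `L_{n-1}^{(α)} = L - L'`, the
exceptional polynomial is `r_n = (x + α) L' - (x + α + 1) L`, and Laguerre's equation for `L` gives
`x r_n² = (α + n) (x + α)² L² + x (x + α) (L r_n)' + (α² - x - x²) L r_n`.
Multiplied by `e^{-x} x^{α-1} / (x + α)²`, the last two terms form the derivative of
`L r_n e^{-x} x^α / (x + α)`, which vanishes at `0` and at `∞`. Hence the integral is
`(α + n) ∫ L² e^{-x} x^{α-1} = (α + n) Γ(α + n - 1) / (n - 1)!`, the classical norm, itself obtained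
by repeated integration by parts against the Laguerre weight.
-/

open Polynomial MeasureTheory

open Filter Set Topology
open scoped Nat

noncomputable def laguerreCoeff (γ : ℝ) (m k : ℕ) : ℝ :=
  (-1) ^ k * (∏ i ∈ Finset.range (m - k), (γ + k + 1 + i)) / ((m - k)! * k ! : ℝ)

theorem coeff_laguerreP (γ : ℝ) (m k : ℕ) :
    (laguerreP γ m).coeff k = if k ≤ m then laguerreCoeff γ m k else 0 := by
  simp only [laguerreP, finsetSum_coeff, coeff_C_mul, coeff_X_pow, mul_ite, mul_one, mul_zero,
    Finset.sum_ite_eq, Finset.mem_range, Nat.lt_succ_iff, laguerreCoeff]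

theorem natDegree_laguerreP_le (γ : ℝ) (m : ℕ) : (laguerreP γ m).natDegree ≤ m :=
  natDegree_le_iff_coeff_eq_zero.2 fun k hk => by
    rw [coeff_laguerreP, if_neg (by simpa using hk)]

theorem coeff_laguerreP_self (γ : ℝ) (m : ℕ) : (laguerreP γ m).coeff m = (-1) ^ m / m ! := by
  simp [coeff_laguerreP, laguerreCoeff]

theorem laguerreP_zero (γ : ℝ) : laguerreP γ 0 = 1 := by
  simp [laguerreP]

theorem laguerreCoeff_succ_succ (γ : ℝ) {m k : ℕ} (hk : k ≤ m) :
    (k + 1) * laguerreCoeff γ (m + 1) (k + 1) = -laguerreCoeff (γ + 1) m k := by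
  obtain ⟨e, rfl⟩ := Nat.exists_eq_add_of_le hk
  have hprod : ∏ i ∈ Finset.range e, (γ + ↑(k + 1) + 1 + i)
      = ∏ i ∈ Finset.range e, (γ + 1 + k + 1 + i) :=
    Finset.prod_congr rfl fun i _ => by push_cast; ring
  simp only [laguerreCoeff, show k + e + 1 - (k + 1) = e by omega, Nat.add_sub_cancel_left, hprod,
    Nat.factorial_succ]
  push_cast
  field_simp
  ring

theorem laguerreCoeff_succ (γ : ℝ) {m k : ℕ} (hk : k ≤ m) :
    laguerreCoeff γ (m + 1) k = laguerreCoeff (γ + 1) (m + 1) k - laguerreCoeff (γ + 1) m k := by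
  obtain ⟨e, rfl⟩ := Nat.exists_eq_add_of_le hk
  have hprod : ∏ i ∈ Finset.range e, (γ + k + 1 + ↑(i + 1))
      = ∏ i ∈ Finset.range e, (γ + 1 + k + 1 + i) :=
    Finset.prod_congr rfl fun i _ => by push_cast; ring
  simp only [laguerreCoeff, show k + e + 1 - k = e + 1 by omega, Nat.add_sub_cancel_left,
    Finset.prod_range_succ' (fun i : ℕ => γ + k + 1 + i), Finset.prod_range_succ, hprod,
    Nat.factorial_succ]
  push_cast
  field_simp
  ring

theorem laguerreCoeff_succ_right (γ : ℝ) {m k : ℕ} (hk : k + 1 ≤ m) :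
    (k + 1) * (γ + k + 1) * laguerreCoeff γ m (k + 1) = -(m - k) * laguerreCoeff γ m k := by
  obtain ⟨e, rfl⟩ := Nat.exists_eq_add_of_le hk
  have hprod : ∏ i ∈ Finset.range e, (γ + k + 1 + ↑(i + 1))
      = ∏ i ∈ Finset.range e, (γ + ↑(k + 1) + 1 + i) :=
    Finset.prod_congr rfl fun i _ => by push_cast; ring
  simp only [laguerreCoeff, show k + 1 + e - k = e + 1 by omega, Nat.add_sub_cancel_left,
    Finset.prod_range_succ' (fun i : ℕ => γ + k + 1 + i), hprod, Nat.factorial_succ]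
  push_cast
  field_simp
  ring

theorem derivative_laguerreP (γ : ℝ) (m : ℕ) :
    derivative (laguerreP γ (m + 1)) = -laguerreP (γ + 1) m := by
  ext k
  rw [coeff_derivative, coeff_neg, coeff_laguerreP, coeff_laguerreP]
  by_cases hk : k ≤ m
  · rw [if_pos (by omega), if_pos hk, ← laguerreCoeff_succ_succ γ hk]
    ring
  · rw [if_neg (by omega), if_neg hk]
    simp

theorem laguerreP_succ (γ : ℝ) (m : ℕ) :
    laguerreP γ (m + 1) = laguerreP (γ + 1) (m + 1) - laguerreP (γ + 1) m := by
  ext k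
  rw [coeff_sub, coeff_laguerreP, coeff_laguerreP, coeff_laguerreP]
  rcases lt_trichotomy k (m + 1) with hk | rfl | hk
  · rw [if_pos hk.le, if_pos hk.le, if_pos (by omega), laguerreCoeff_succ γ (by omega)]
  · simp [laguerreCoeff]
  · rw [if_neg (by omega), if_neg (by omega), if_neg (by omega), sub_zero]

theorem laguerreP_ode (γ : ℝ) (m : ℕ) :
    X * derivative (derivative (laguerreP γ m)) + (C (γ + 1) - X) * derivative (laguerreP γ m)
      + C (m : ℝ) * laguerreP γ m = 0 := by
  have hrec (k : ℕ) : (k + 1) * (γ + k + 1) * (laguerreP γ m).coeff (k + 1)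
      = -(m - k) * (laguerreP γ m).coeff k := by
    rw [coeff_laguerreP, coeff_laguerreP]
    rcases lt_trichotomy (k + 1) (m + 1) with hk | hk | hk
    · rw [if_pos (by omega), if_pos (by omega), laguerreCoeff_succ_right γ (by omega)]
    · obtain rfl : k = m := by omega
      simp
    · rw [if_neg (by omega), if_neg (by omega)]
      simp
  ext k
  simp only [coeff_add, coeff_zero, coeff_C_mul, sub_mul, coeff_sub, coeff_derivative]
  cases k with
  | zero =>
    have h := hrec 0
    simp only [mul_coeff_zero, coeff_X_zero, zero_mul, coeff_derivative] at h ⊢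
    push_cast at h ⊢
    linear_combination h
  | succ k =>
    have h := hrec (k + 1)
    simp only [coeff_X_mul, coeff_derivative]
    push_cast at h ⊢
    linear_combination h

noncomputable def laguerreWeight (γ x : ℝ) : ℝ := Real.exp (-x) * x ^ γ

theorem pow_mul_laguerreWeight {x : ℝ} (hx : 0 < x) (γ : ℝ) (k : ℕ) :
    x ^ k * laguerreWeight γ x = laguerreWeight (γ + k) x := by
  rw [laguerreWeight, laguerreWeight, Real.rpow_add hx, Real.rpow_natCast]
  ring

theorem laguerreWeight_add_one {x : ℝ} (hx : 0 < x) (γ : ℝ) :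
    laguerreWeight (γ + 1) x = x * laguerreWeight γ x := by
  simpa using (pow_mul_laguerreWeight hx γ 1).symm

theorem laguerreWeight_zero_right {γ : ℝ} (hγ : γ ≠ 0) : laguerreWeight γ 0 = 0 := by
  simp [laguerreWeight, Real.zero_rpow hγ]

theorem continuousAt_laguerreWeight {γ x : ℝ} (h : x ≠ 0 ∨ 0 ≤ γ) :
    ContinuousAt (laguerreWeight γ) x :=
  (Real.continuous_exp.comp continuous_neg).continuousAt.mul
    (Real.continuousAt_rpow_const x γ h)

theorem tendsto_laguerreWeight_atTop (γ : ℝ) : Tendsto (laguerreWeight γ) atTop (𝓝 0) := by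
  unfold laguerreWeight
  simpa [mul_comm] using tendsto_rpow_mul_exp_neg_mul_atTop_nhds_zero γ 1 one_pos

theorem integrableOn_laguerreWeight {γ : ℝ} (hγ : -1 < γ) :
    IntegrableOn (laguerreWeight γ) (Ioi 0) := by
  unfold laguerreWeight
  simpa using Real.GammaIntegral_convergent (s := γ + 1) (by linarith)

theorem integral_laguerreWeight {γ : ℝ} (hγ : -1 < γ) :
    ∫ x in Ioi 0, laguerreWeight γ x = Real.Gamma (γ + 1) := by
  simp [Real.Gamma_eq_integral (show 0 < γ + 1 by linarith), laguerreWeight]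

theorem poly_mul_laguerreWeight_eq_sum (p : ℝ[X]) {x : ℝ} (hx : 0 < x) (γ : ℝ) :
    p.eval x * laguerreWeight γ x
      = ∑ k ∈ Finset.range (p.natDegree + 1), p.coeff k * laguerreWeight (γ + k) x := by
  simp only [eval_eq_sum_range, Finset.sum_mul, mul_assoc, pow_mul_laguerreWeight hx]

theorem integrableOn_poly_mul_laguerreWeight (p : ℝ[X]) {γ : ℝ} (hγ : -1 < γ) :
    IntegrableOn (fun x => p.eval x * laguerreWeight γ x) (Ioi 0) := by
  refine IntegrableOn.congr_fun ?_
    (fun x hx => (poly_mul_laguerreWeight_eq_sum p hx γ).symm) measurableSet_Ioi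
  refine integrable_finsetSum _ fun k _ => (integrableOn_laguerreWeight ?_).const_mul _
  have : (0 : ℝ) ≤ k := k.cast_nonneg
  linarith

theorem tendsto_poly_mul_laguerreWeight_atTop (p : ℝ[X]) (γ : ℝ) :
    Tendsto (fun x => p.eval x * laguerreWeight γ x) atTop (𝓝 0) := by
  have h := tendsto_finsetSum (Finset.range (p.natDegree + 1))
    fun k _ => (tendsto_laguerreWeight_atTop (γ + k)).const_mul (p.coeff k)
  simp only [mul_zero, Finset.sum_const_zero] at h
  refine h.congr' ?_
  filter_upwards [eventually_gt_atTop 0] with x hx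
  exact (poly_mul_laguerreWeight_eq_sum p hx γ).symm

theorem hasDerivAt_poly_mul_laguerreWeight (p : ℝ[X]) (γ : ℝ) {x : ℝ} (hx : 0 < x) :
    HasDerivAt (fun y => p.eval y * laguerreWeight γ y)
      ((X * derivative p + (C γ - X) * p).eval x * laguerreWeight (γ - 1) x) x := by
  have hw : HasDerivAt (laguerreWeight γ)
      (-Real.exp (-x) * x ^ γ + Real.exp (-x) * (γ * x ^ (γ - 1))) x := by
    refine ((hasDerivAt_neg x).exp.mul (Real.hasDerivAt_rpow_const (Or.inl hx.ne'))).congr_deriv ?_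
    ring
  refine ((p.hasDerivAt x).mul hw).congr_deriv ?_
  simp only [eval_add, eval_mul, eval_sub, eval_X, eval_C, laguerreWeight,
    Real.rpow_sub_one hx.ne']
  field_simp
  ring

theorem integral_derivative_mul_laguerreWeight (p : ℝ[X]) {γ : ℝ} (hγ : 0 < γ) :
    ∫ x in Ioi 0, (X * derivative p + (C γ - X) * p).eval x * laguerreWeight (γ - 1) x = 0 := by
  have hcont : ContinuousWithinAt (fun y => p.eval y * laguerreWeight γ y) (Ici 0) 0 :=
    (p.continuousAt.mul (continuousAt_laguerreWeight (Or.inr hγ.le))).continuousWithinAt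
  rw [integral_Ioi_of_hasDerivAt_of_tendsto hcont
    (fun x hx => hasDerivAt_poly_mul_laguerreWeight p γ hx)
    (integrableOn_poly_mul_laguerreWeight _ (by linarith))
    (tendsto_poly_mul_laguerreWeight_atTop p γ), laguerreWeight_zero_right hγ.ne']
  simp

/-- Integrating by parts against `x^{γ+1} e^{-x}` trades `L_{m+1}^{(γ)}` for
`L_m^{(γ+1)} = -(L_{m+1}^{(γ)})'` and `p` for `p'`, by Laguerre's equation. -/
theorem integral_mul_laguerreP {γ : ℝ} (hγ : -1 < γ) {m : ℕ} {p : ℝ[X]} (hp : p.natDegree ≤ m) :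
    ∫ x in Ioi 0, (p * laguerreP γ m).eval x * laguerreWeight γ x
      = (-1) ^ m * p.coeff m * Real.Gamma (γ + m + 1) := by
  induction m generalizing γ p with
  | zero =>
    rw [eq_C_of_natDegree_le_zero hp]
    simp [laguerreP_zero, integral_const_mul, integral_laguerreWeight hγ]
  | succ m ih =>
    set L := laguerreP (γ + 1) m
    have hpoly : X * derivative (p * L) + (C (γ + 1) - X) * (p * L)
        = X * (derivative p * L) + C ((m : ℝ) + 1) * (p * laguerreP γ (m + 1)) := by
      have hode := laguerreP_ode γ (m + 1)
      simp only [derivative_laguerreP, derivative_neg] at hode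
      push_cast at hode
      rw [derivative_mul]
      linear_combination (-p) * hode
    have hint (q : ℝ[X]) : IntegrableOn (fun x => q.eval x * laguerreWeight γ x) (Ioi 0) :=
      integrableOn_poly_mul_laguerreWeight q hγ
    have hlow : ∫ x in Ioi 0, (X * (derivative p * L)).eval x * laguerreWeight γ x
        = (-1) ^ m * ((m + 1) * p.coeff (m + 1)) * Real.Gamma (γ + (m + 1) + 1) := by
      have hdeg : (derivative p).natDegree ≤ m :=
        (natDegree_derivative_le p).trans (by omega)
      rw [← setIntegral_congr_fun measurableSet_Ioi fun x (hx : 0 < x) => by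
        rw [eval_mul, eval_X, mul_comm x, mul_assoc, ← laguerreWeight_add_one hx],
        ih (by linarith) hdeg, coeff_derivative]
      ring_nf
    have hibp := integral_derivative_mul_laguerreWeight (p * L) (γ := γ + 1) (by linarith)
    simp only [hpoly, add_sub_cancel_right, eval_add, add_mul] at hibp
    rw [integral_add (hint _) (hint _), hlow] at hibp
    simp only [eval_C_mul, mul_assoc, integral_const_mul] at hibp
    push_cast
    refine mul_left_cancel₀ (show (m : ℝ) + 1 ≠ 0 by positivity) ?_
    linear_combination hibp

theorem integral_laguerreP_sq {γ : ℝ} (hγ : -1 < γ) (m : ℕ) :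
    ∫ x in Ioi 0, (laguerreP γ m).eval x ^ 2 * laguerreWeight γ x
      = Real.Gamma (γ + m + 1) / m ! := by
  have h := integral_mul_laguerreP hγ (natDegree_laguerreP_le γ m)
  simp only [← sq, eval_pow, coeff_laguerreP_self] at h
  rw [h, ← mul_div_assoc, ← mul_pow, neg_one_mul, neg_neg, one_pow]
  ring

theorem rE_natCast_succ (α : ℝ) (m : ℕ) :
    rE α ((m + 1 : ℕ) : ℤ) = (X + C α) * derivative (laguerreP (α - 1) m)
      - (X + C (α + 1)) * laguerreP (α - 1) m := by
  cases m with
  | zero => simp [rE, Lz, laguerreP_zero]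
  | succ m =>
    have hLz (k : ℕ) : Lz α k = laguerreP α k := by simp [Lz]
    rw [rE, show ((m + 1 + 1 : ℕ) : ℤ) - 1 = (m + 1 : ℕ) by push_cast; ring,
      show ((m + 1 + 1 : ℕ) : ℤ) - 2 = m by push_cast; ring, hLz, hLz,
      derivative_laguerreP, laguerreP_succ (α - 1) m, sub_add_cancel, C_add, C_1]
    ring

theorem X_mul_rE_sq (α : ℝ) (m : ℕ) :
    X * rE α ((m + 1 : ℕ) : ℤ) ^ 2
      = C (α + m + 1) * (X + C α) ^ 2 * laguerreP (α - 1) m ^ 2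
        + X * (X + C α) * derivative (laguerreP (α - 1) m * rE α ((m + 1 : ℕ) : ℤ))
        + (C α ^ 2 - X - X ^ 2) * (laguerreP (α - 1) m * rE α ((m + 1 : ℕ) : ℤ)) := by
  have hode := laguerreP_ode (α - 1) m
  rw [sub_add_cancel] at hode
  rw [rE_natCast_succ]
  simp only [derivative_mul, derivative_sub, derivative_add, derivative_X, derivative_C,
    derivative_one, C_add, C_1] at *
  linear_combination (-(X + C α) ^ 2 * laguerreP (α - 1) m) * hode

theorem integrableOn_poly_mul_laguerreWeight_div_sq (p : ℝ[X]) {γ c : ℝ} (hγ : -1 < γ)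
    (hc : 0 < c) :
    IntegrableOn (fun x => p.eval x * (laguerreWeight γ x / (x + c) ^ 2)) (Ioi 0) := by
  have hbound : ∀ᵐ x ∂volume.restrict (Ioi (0 : ℝ)), ‖((x + c) ^ 2)⁻¹‖ ≤ (c ^ 2)⁻¹ := by
    filter_upwards [ae_restrict_mem measurableSet_Ioi] with x (hx : 0 < x)
    rw [norm_inv, norm_pow, Real.norm_of_nonneg (by linarith)]
    gcongr
    linarith
  have h : IntegrableOn (fun x => p.eval x * laguerreWeight γ x * ((x + c) ^ 2)⁻¹) (Ioi 0) :=
    (integrableOn_poly_mul_laguerreWeight p hγ).mul_bdd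
      (by fun_prop : Measurable fun x : ℝ => ((x + c) ^ 2)⁻¹).aestronglyMeasurable hbound
  simpa only [mul_assoc, div_eq_mul_inv] using h

theorem hasDerivAt_laguerreP_mul_rE_div (m : ℕ) {α x : ℝ} (hα : 0 ≤ α) (hx : 0 < x) :
    HasDerivAt (fun y =>
        (laguerreP (α - 1) m * rE α ((m + 1 : ℕ) : ℤ)).eval y * laguerreWeight α y / (y + α))
      ((rE α ((m + 1 : ℕ) : ℤ)).eval x ^ 2 * (laguerreWeight α x / (x + α) ^ 2)
        - (α + m + 1) * ((laguerreP (α - 1) m).eval x ^ 2 * laguerreWeight (α - 1) x)) x := by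
  have hxα : x + α ≠ 0 := by positivity
  have hw : laguerreWeight α x = x * laguerreWeight (α - 1) x := by
    simpa using laguerreWeight_add_one hx (α - 1)
  have hkey := congrArg (eval x) (X_mul_rE_sq α m)
  simp only [eval_add, eval_mul, eval_sub, eval_pow, eval_X, eval_C] at hkey
  refine (((hasDerivAt_poly_mul_laguerreWeight _ α hx).div
    ((hasDerivAt_id x).add_const α) hxα).congr_deriv ?_)
  simp only [eval_add, eval_mul, eval_sub, eval_X, eval_C, id]
  rw [hw]
  field_simp
  linear_combination (-laguerreWeight (α - 1) x) * hkey

theorem integral_rE_sq_mul_laguerreWeight_div {α : ℝ} (hα : 0 < α) (m : ℕ) :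
    ∫ x in Ioi 0, (rE α ((m + 1 : ℕ) : ℤ)).eval x ^ 2 * (laguerreWeight α x / (x + α) ^ 2)
      = (α + m + 1) *
          ∫ x in Ioi 0, (laguerreP (α - 1) m).eval x ^ 2 * laguerreWeight (α - 1) x := by
  set P := laguerreP (α - 1) m * rE α ((m + 1 : ℕ) : ℤ)
  have hcont : ContinuousWithinAt (fun y => P.eval y * laguerreWeight α y / (y + α)) (Ici 0) 0 :=
    ((P.continuousAt.mul (continuousAt_laguerreWeight (Or.inr hα.le))).div
      (continuousAt_id.add continuousAt_const) (by simpa using hα.ne')).continuousWithinAt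
  have htop : Tendsto (fun y => P.eval y * laguerreWeight α y / (y + α)) atTop (𝓝 0) := by
    simpa [div_eq_mul_inv] using (tendsto_poly_mul_laguerreWeight_atTop P α).mul
      (tendsto_inv_atTop_zero.comp (tendsto_atTop_add_const_right _ α tendsto_id))
  have hL := (integrableOn_poly_mul_laguerreWeight (laguerreP (α - 1) m ^ 2)
    (show -1 < α - 1 by linarith)).const_mul (α + m + 1)
  have hR :=
    integrableOn_poly_mul_laguerreWeight_div_sq (rE α ((m + 1 : ℕ) : ℤ) ^ 2) (by linarith) hα
  simp only [eval_pow] at hL hR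
  have hftc := integral_Ioi_of_hasDerivAt_of_tendsto hcont
    (fun x hx => hasDerivAt_laguerreP_mul_rE_div m hα.le hx) (hR.sub hL) htop
  rw [integral_sub hR hL, integral_const_mul, laguerreWeight_zero_right hα.ne'] at hftc
  simpa [sub_eq_zero] using hftc

/-- the squared norm of `r_n` with respect to `e^{-x} x^α/(x+α)²` equals
`(α+n) Γ(n+α) / ((α+n-1)(n-1)!)`. -/
theorem exceptional_laguerre_norm (α : ℝ) (hα : 0 < α) (n : ℕ) (hn : 1 ≤ n) :
    ∫ x in Set.Ioi (0 : ℝ), ((rE α (n : ℤ)).eval x) ^ 2 *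
      (Real.exp (-x) * x ^ α / (x + α) ^ 2)
      = (α + n) * Real.Gamma ((n : ℝ) + α) /
        ((α + (n : ℝ) - 1) * (Nat.factorial (n - 1) : ℝ)) := by
  obtain ⟨m, rfl⟩ := Nat.exists_eq_add_of_le' hn
  have hΓ : Real.Gamma ((m + 1 : ℕ) + α) = (α + m) * Real.Gamma (α + m) := by
    rw [← Real.Gamma_add_one (by positivity)]
    push_cast
    ring_nf
  have hαm : α + m ≠ 0 := by positivity
  refine (integral_rE_sq_mul_laguerreWeight_div hα m).trans ?_
  rw [integral_laguerreP_sq (by linarith), show α - 1 + m + 1 = α + m by ring, hΓ,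
    Nat.add_sub_cancel]
  push_cast
  rw [show α + ((m : ℝ) + 1) - 1 = α + m by ring]
  field_simp
  ring
end
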